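/- arXiv:2408.07821 — 7 statements merged into one kernel-verified Lean document; each statement's English description precedes it below -/
import Mathlib

section
/- Suppose ∑_i log(e_i) ≥ 0, let z = f(max_i v_i(G)/e_i) where f(x) = (x + x³/3)/ln(1+x), let A^DEC maximize ∑_i u_i(A_i) over all allocations and A^OPT maximize Nash welfare ∑_i log(v_i(A_i)+e_i). Then z · NW(A^DEC) ≥ NW(A^OPT). -/
open Finset

/-- The value an agent `i` has for their bundle under assignment `A`. -/
def bundleVal {N G : Type*} [Fintype G] [DecidableEq N]
    (v : N → G → ℝ) (A : G → N) (i : N) : ℝ :=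
  ∑ g ∈ Finset.univ.filter (fun g => A g = i), v i g

/-- Nash welfare of an assignment. -/
noncomputable def NW {N G : Type*} [Fintype N] [Fintype G] [DecidableEq N]
    (v : N → G → ℝ) (e : N → ℝ) (A : G → N) : ℝ :=
  ∑ i, Real.log (bundleVal v A i + e i)

/-- The decentralized objective `∑ i, u_i(A_i)`. -/
noncomputable def uSum {N G : Type*} [Fintype N] [Fintype G] [DecidableEq N]
    (v : N → G → ℝ) (e : N → ℝ) (A : G → N) : ℝ :=
  ∑ i, ∑ g ∈ Finset.univ.filter (fun g => A g = i),
    (Real.log (v i g + e i) - Real.log (e i))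

/-!
Write `x = v_i(A_i)/e_i`, so that `u*_i(A_i) = log (1 + x)`. Subadditivity of `log (1 + ·)` on
`[0, ∞)` gives `u* ≤ u`, while `log (1 + t) ≤ t` gives `u ≤ x`. Since `x ≤ M`, concavity of `log`
puts `log (1 + x)` above the chord `(x / M) log (1 + M)`, and `z log (1 + M) ≥ M`, hence
`u ≤ x ≤ z u*`. Summing over agents, with `E = ∑ log e_i`,
`NW(A^OPT) - E ≤ u(A^OPT) ≤ u(A^DEC) ≤ z (NW(A^DEC) - E)`, and `(z - 1) E ≥ 0` concludes.
-/

open Real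

lemma log_add_sub_log_eq_log_one_add_div {w e : ℝ} (hw : 0 ≤ w) (he : 0 < e) :
    log (w + e) - log e = log (1 + w / e) := by
  rw [← log_div (by positivity) he.ne', add_div, div_self he.ne', add_comm]

lemma log_one_add_add_le {x y : ℝ} (hx : 0 ≤ x) (hy : 0 ≤ y) :
    log (1 + (x + y)) ≤ log (1 + x) + log (1 + y) := by
  rw [← log_mul (by positivity) (by positivity)]
  exact log_le_log (by positivity) (by nlinarith [mul_nonneg hx hy])

lemma log_one_add_sum_le_sum {ι : Type*} (s : Finset ι) {x : ι → ℝ} (hx : ∀ i ∈ s, 0 ≤ x i) :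
    log (1 + ∑ i ∈ s, x i) ≤ ∑ i ∈ s, log (1 + x i) :=
  le_sum_of_subadditive_on_pred (fun t => log (1 + t)) (0 ≤ ·) (by simp)
    (fun _ _ => log_one_add_add_le) (fun _ _ => add_nonneg) x hx

lemma mul_log_one_add_le_log_one_add_mul {M t : ℝ} (hM : -1 < M) (ht₀ : 0 ≤ t) (ht₁ : t ≤ 1) :
    t * log (1 + M) ≤ log (1 + t * M) := by
  have h := strictConcaveOn_log_Ioi.concaveOn.2 (x := 1) (y := 1 + M)
    (by norm_num) (by rw [Set.mem_Ioi]; linarith) (sub_nonneg.2 ht₁) ht₀ (by ring)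
  simp only [smul_eq_mul, log_one, mul_zero, zero_add, mul_one] at h
  rwa [show 1 - t + t * (1 + M) = 1 + t * M by ring] at h

lemma log_one_add_le_self {t : ℝ} (ht : -1 < t) : log (1 + t) ≤ t :=
  (log_le_sub_one_of_pos (by linarith)).trans_eq (by ring)

lemma one_le_of_le_mul_log_one_add {M c : ℝ} (hM : 0 < M) (hc : M ≤ c * log (1 + M)) :
    1 ≤ c := by
  have hlog : 0 < log (1 + M) := log_pos (by linarith)
  exact le_of_mul_le_mul_right (by linarith [log_one_add_le_self (t := M) (by linarith)]) hlog

lemma sum_log_one_add_le_mul_log_one_add_sum {ι : Type*} (s : Finset ι) {x : ι → ℝ} {M c : ℝ}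
    (hM : 0 < M) (hc : M ≤ c * log (1 + M)) (hx : ∀ i ∈ s, 0 ≤ x i)
    (hsum : ∑ i ∈ s, x i ≤ M) :
    ∑ i ∈ s, log (1 + x i) ≤ c * log (1 + ∑ i ∈ s, x i) := by
  set X := ∑ i ∈ s, x i
  have hX : 0 ≤ X := sum_nonneg hx
  have hc₀ : 0 ≤ c := by linarith [one_le_of_le_mul_log_one_add hM hc]
  have chord := mul_log_one_add_le_log_one_add_mul (M := M) (t := X / M) (by linarith)
    (by positivity) ((div_le_one hM).2 hsum)
  rw [div_mul_cancel₀ X hM.ne'] at chord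
  calc ∑ i ∈ s, log (1 + x i)
      ≤ X := sum_le_sum fun i hi => log_one_add_le_self (by linarith [hx i hi])
    _ = X / M * M := (div_mul_cancel₀ X hM.ne').symm
    _ ≤ X / M * (c * log (1 + M)) := by gcongr
    _ = c * (X / M * log (1 + M)) := by ring
    _ ≤ c * log (1 + X) := by gcongr

lemma log_sum_add_sub_log_le {ι : Type*} (s : Finset ι) {w : ι → ℝ} {e : ℝ}
    (hw : ∀ i ∈ s, 0 ≤ w i) (he : 0 < e) :
    log (∑ i ∈ s, w i + e) - log e ≤ ∑ i ∈ s, (log (w i + e) - log e) := by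
  rw [log_add_sub_log_eq_log_one_add_div (sum_nonneg hw) he, sum_div,
    sum_congr rfl fun i hi => log_add_sub_log_eq_log_one_add_div (hw i hi) he]
  exact log_one_add_sum_le_sum s fun i hi => div_nonneg (hw i hi) he.le

lemma sum_log_add_sub_log_le_mul {ι : Type*} (s : Finset ι) {w : ι → ℝ} {e M c : ℝ}
    (hM : 0 < M) (hc : M ≤ c * log (1 + M)) (hw : ∀ i ∈ s, 0 ≤ w i) (he : 0 < e)
    (hsum : ∑ i ∈ s, w i ≤ M * e) :
    ∑ i ∈ s, (log (w i + e) - log e) ≤ c * (log (∑ i ∈ s, w i + e) - log e) := by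
  rw [log_add_sub_log_eq_log_one_add_div (sum_nonneg hw) he, sum_div,
    sum_congr rfl fun i hi => log_add_sub_log_eq_log_one_add_div (hw i hi) he]
  refine sum_log_one_add_le_mul_log_one_add_sum s hM hc
    (fun i hi => div_nonneg (hw i hi) he.le) ?_
  rwa [← sum_div, div_le_iff₀ he]

theorem stmt3_general {N G : Type*} [Fintype N] [Fintype G] [DecidableEq N]
    (v : N → G → ℝ) (hv : ∀ i g, 0 ≤ v i g)
    (e : N → ℝ) (he : ∀ i, 0 < e i)
    (hE : 0 ≤ ∑ i, Real.log (e i))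
    (M : ℝ) (hMpos : 0 < M)
    (hM : IsGreatest (Set.range fun i => (∑ g, v i g) / e i) M)
    (z : ℝ) (hz : z = (M + M ^ 3 / 3) / Real.log (1 + M))
    (Adec Aopt : G → N)
    (hdec : ∀ A : G → N, uSum v e A ≤ uSum v e Adec) :
    NW v e Aopt ≤ z * NW v e Adec := by
  set E := ∑ i, log (e i)
  have hc : M ≤ z * log (1 + M) := by
    rw [hz, div_mul_cancel₀ _ (log_pos (by linarith)).ne']
    linarith [pow_pos hMpos 3]
  have hbundle (A : G → N) (i : N) : bundleVal v A i ≤ M * e i :=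
    (sum_le_sum_of_subset_of_nonneg (filter_subset _ _) fun g _ _ => hv i g).trans
      ((div_le_iff₀ (he i)).1 (hM.2 ⟨i, rfl⟩))
  have lower : NW v e Aopt - E ≤ uSum v e Aopt := by
    rw [NW, uSum, ← sum_sub_distrib]
    exact sum_le_sum fun i _ => log_sum_add_sub_log_le _ (fun g _ => hv i g) (he i)
  have upper : uSum v e Adec ≤ z * (NW v e Adec - E) := by
    rw [NW, uSum, ← sum_sub_distrib, mul_sum]
    exact sum_le_sum fun i _ =>
      sum_log_add_sub_log_le_mul _ hMpos hc (fun g _ => hv i g) (he i) (hbundle Adec i)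
  have hz₁ : 1 ≤ z := one_le_of_le_mul_log_one_add hMpos hc
  linarith [hdec Aopt, mul_nonneg (sub_nonneg.2 hz₁) hE]

theorem stmt3 {N G : Type*} [Fintype N] [Fintype G] [Nonempty N] [DecidableEq N]
    (v : N → G → ℝ) (hv : ∀ i g, 0 ≤ v i g)
    (e : N → ℝ) (he : ∀ i, 0 < e i)
    (hE : 0 ≤ ∑ i, Real.log (e i))
    (M : ℝ) (hMpos : 0 < M)
    (hM : IsGreatest (Set.range fun i => (∑ g, v i g) / e i) M)
    (z : ℝ) (hz : z = (M + M ^ 3 / 3) / Real.log (1 + M))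
    (Adec Aopt : G → N)
    (hdec : ∀ A : G → N, uSum v e A ≤ uSum v e Adec)
    (hopt : ∀ A : G → N, NW v e A ≤ NW v e Aopt) :
    NW v e Aopt ≤ z * NW v e Adec :=
  stmt3_general v hv e he hE M hMpos hM z hz Adec Aopt hdec
end

section
/- Suppose all nonzero valuations lie in the interval [ℓ, h] with 0 < ℓ ≤ h (0–ℓ–h valuations). If e_i < (ℓ/h)·e_j, then in the decentralized solution A^DEC (where each good g goes to an agent maximizing v_k(g)/e_k), agent j's bundle contains no good that agent i values positively, hence v_i(A^DEC_i) ≥ v_i(A^DEC_j). -/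
open Finset

lemma nonneg_of_eq_zero_or_mem_Icc {ℓ h x : ℝ} (hℓ : 0 ≤ ℓ) (hx : x = 0 ∨ x ∈ Set.Icc ℓ h) :
    0 ≤ x := by
  rcases hx with rfl | ⟨hℓx, -⟩
  exacts [le_rfl, hℓ.trans hℓx]

lemma le_of_eq_zero_or_mem_Icc {ℓ h x : ℝ} (hh : 0 ≤ h) (hx : x = 0 ∨ x ∈ Set.Icc ℓ h) :
    x ≤ h := by
  rcases hx with rfl | ⟨-, hxh⟩
  exacts [hh, hxh]

lemma eq_zero_of_div_le_div_of_lt_div_mul {ℓ h x y a b : ℝ} (hℓ : 0 < ℓ)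
    (hx : x = 0 ∨ x ∈ Set.Icc ℓ h) (hy : y = 0 ∨ y ∈ Set.Icc ℓ h)
    (ha : 0 < a) (hb : 0 < b) (hxy : x / a ≤ y / b) (hab : a < ℓ / h * b) : x = 0 := by
  rcases hx with hx | ⟨hℓx, hxh⟩
  · exact hx
  have hh : 0 < h := hℓ.trans_le (hℓx.trans hxh)
  have hab' : h * a < ℓ * b := by
    rwa [div_mul_eq_mul_div, lt_div_iff₀ hh, mul_comm] at hab
  have hxℓ : x < ℓ :=
    calc x = x / a * a := (div_mul_cancel₀ x ha.ne').symm
      _ ≤ y / b * a := by gcongr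
      _ ≤ h / b * a := by gcongr; exact le_of_eq_zero_or_mem_Icc hh.le hy
      _ = h * a / b := div_mul_eq_mul_div h b a
      _ < ℓ := (div_lt_iff₀ hb).mpr hab'
  linarith

theorem stmt8_general {N G : Type*} [Fintype G] [DecidableEq N]
    (ℓ h : ℝ) (hℓ : 0 < ℓ)
    (v : N → G → ℝ)
    (hvals : ∀ k g, v k g = 0 ∨ v k g ∈ Set.Icc ℓ h)
    (e : N → ℝ) (he : ∀ k, 0 < e k)
    (A : G → N)
    -- each good is assigned to an agent maximizing v_k(g)/e_k
    (hA : ∀ g k, v k g / e k ≤ v (A g) g / e (A g))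
    (i j : N) (hij : e i < (ℓ / h) * e j) :
    (∀ g, A g = j → v i g = 0) ∧
    (∑ g ∈ Finset.univ.filter (fun g => A g = j), v i g
      ≤ ∑ g ∈ Finset.univ.filter (fun g => A g = i), v i g) := by
  have hj : ∀ g, A g = j → v i g = 0 := fun g hg =>
    eq_zero_of_div_le_div_of_lt_div_mul hℓ (hvals i g) (hvals j g) (he i) (he j)
      (hg ▸ hA g i) hij
  refine ⟨hj, ?_⟩
  rw [sum_eq_zero fun g hg => hj g (mem_filter.mp hg).2]
  exact sum_nonneg fun g _ => nonneg_of_eq_zero_or_mem_Icc hℓ.le (hvals i g)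

theorem stmt8 {N G : Type*} [Fintype G] [DecidableEq N]
    (ℓ h : ℝ) (hℓ : 0 < ℓ) (hℓh : ℓ ≤ h)
    (v : N → G → ℝ)
    (hvals : ∀ k g, v k g = 0 ∨ v k g ∈ Set.Icc ℓ h)
    (e : N → ℝ) (he : ∀ k, 0 < e k)
    (A : G → N)
    -- each good is assigned to an agent maximizing v_k(g)/e_k
    (hA : ∀ g k, v k g / e k ≤ v (A g) g / e (A g))
    (i j : N) (hij : e i < (ℓ / h) * e j) :
    (∀ g, A g = j → v i g = 0) ∧
    (∑ g ∈ Finset.univ.filter (fun g => A g = j), v i g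
      ≤ ∑ g ∈ Finset.univ.filter (fun g => A g = i), v i g) :=
  stmt8_general ℓ h hℓ v hvals e he A hA i j hij
end

section
/- If valuations are drawn from {0, h} for a fixed h > 0, then the decentralized solution is endowment-relative envy-free: for all agents i, j with e_i < e_j, v_i(A^DEC_i) ≥ v_i(A^DEC_j). -/
/-! If agent `i` values a good at `h`, then its ratio `h / e i` strictly beats the ratio
`v j g / e j ≤ h / e j` of any agent `j` with a larger endowment, so no such good goes to `j`.
Hence `i` values `j`'s bundle at `0`, while its own bundle has nonnegative value. -/

open Finset

section RatioAssignment

variable {N G : Type*} {v : N → G → ℝ} {e : N → ℝ} {A : G → N}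

theorem ratio_lt_of_endowment_lt {g : G} {i j : N} (hei : 0 < e i) (hij : e i < e j)
    (hle : v j g ≤ v i g) (hpos : 0 < v i g) : v j g / e j < v i g / e i :=
  (div_le_div_of_nonneg_right hle (hei.trans hij).le).trans_lt
    (div_lt_div_of_pos_left hpos hei hij)

theorem assign_ne_of_ratio_lt (hA : ∀ g k, v k g / e k ≤ v (A g) g / e (A g)) {g : G}
    {i j : N} (hlt : v j g / e j < v i g / e i) : A g ≠ j := by
  rintro rfl
  exact (hA g i).not_gt hlt

theorem valuation_eq_zero_of_assign_eq {h : ℝ} (hh : 0 < h)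
    (hvals : ∀ k g, v k g = 0 ∨ v k g = h) (he : ∀ k, 0 < e k)
    (hA : ∀ g k, v k g / e k ≤ v (A g) g / e (A g)) {g : G} {i j : N} (hij : e i < e j)
    (hg : A g = j) : v i g = 0 := by
  refine (hvals i g).resolve_right fun hvi => assign_ne_of_ratio_lt hA (i := i) ?_ hg
  have hle : v j g ≤ v i g := by rcases hvals j g with hvj | hvj <;> linarith
  exact ratio_lt_of_endowment_lt (he i) hij hle (hvi ▸ hh)

end RatioAssignment

theorem stmt9 {N G : Type*} [Fintype G] [DecidableEq N]
    (h : ℝ) (hh : 0 < h)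
    (v : N → G → ℝ)
    (hvals : ∀ k g, v k g = 0 ∨ v k g = h)
    (e : N → ℝ) (he : ∀ k, 0 < e k)
    (A : G → N)
    -- each good is assigned to an agent maximizing v_k(g)/e_k
    (hA : ∀ g k, v k g / e k ≤ v (A g) g / e (A g))
    (i j : N) (hij : e i < e j) :
    ∑ g ∈ Finset.univ.filter (fun g => A g = j), v i g
      ≤ ∑ g ∈ Finset.univ.filter (fun g => A g = i), v i g := by
  have henvy : ∑ g ∈ univ.filter (fun g => A g = j), v i g = 0 :=
    sum_eq_zero fun g hg =>
      valuation_eq_zero_of_assign_eq hh hvals he hA hij (mem_filter.mp hg).2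
  rw [henvy]
  exact sum_nonneg fun g _ => by rcases hvals i g with hv | hv <;> linarith
end

section
/- Let X and Y be independent real-valued random variables with Y admitting a density, and let Z be any event. Then E[X | Z ∧ (X ≥ Y)] ≥ E[X | Z ∧ (X ≤ Y)], whenever these conditional expectations are defined. -/
/-!
Truncating `X` from above at a level `y` can only lower its mean on `Z`, and truncating it from
below can only raise it: `P(Z) · E[X; Z ∩ {X ≤ y}] ≤ E[X; Z] · P(Z ∩ {X ≤ y})`, and the reverse
inequality for `{y ≤ X}`. As `Y` is independent of `(X, 1_Z)`, Fubini on the product law writes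
`Z ∩ {X ≤ Y}` and `Z ∩ {Y ≤ X}` as mixtures of these truncations over the law of `Y`, hence
`E[X | Z, X ≤ Y] ≤ E[X | Z] ≤ E[X | Z, Y ≤ X]`.
-/

open MeasureTheory ProbabilityTheory

section Truncation

variable {Ω : Type*} [MeasurableSpace Ω] {μ : Measure Ω} [IsFiniteMeasure μ]
  {X : Ω → ℝ} {Z T : Set Ω} {c : ℝ}

theorem setIntegral_mul_sub_const (hX : IntegrableOn X Z μ) (a b : ℝ) :
    ∫ ω in Z, (a * X ω - b) ∂μ = a * ∫ ω in Z, X ω ∂μ - b * μ.real Z := by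
  rw [integral_sub (hX.const_mul a) integrableOn_const, integral_const_mul, setIntegral_const,
    smul_eq_mul, mul_comm (μ.real Z)]

theorem mul_setIntegral_inter_le_of_le_of_ge (hX : IntegrableOn X Z μ) (hZ : MeasurableSet Z)
    (hT : MeasurableSet T) (hle : ∀ ω ∈ Z ∩ T, X ω ≤ c) (hge : ∀ ω ∈ Z \ T, c ≤ X ω) :
    μ.real Z * ∫ ω in Z ∩ T, X ω ∂μ ≤ (∫ ω in Z, X ω ∂μ) * μ.real (Z ∩ T) := by
  have below : ∫ ω in Z ∩ T, X ω ∂μ ≤ c * μ.real (Z ∩ T) := by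
    simpa only [setIntegral_const, smul_eq_mul, mul_comm] using
      setIntegral_mono_on (hX.mono_set Set.inter_subset_left) integrableOn_const
        (hZ.inter hT) hle
  have above : c * μ.real (Z \ T) ≤ ∫ ω in Z \ T, X ω ∂μ :=
    setIntegral_ge_of_const_le_real (hZ.diff hT) (measure_ne_top μ _) hge
      (hX.mono_set Set.sdiff_subset)
  have h₁ := mul_le_mul_of_nonneg_left below (measureReal_nonneg (μ := μ) (s := Z \ T))
  have h₂ := mul_le_mul_of_nonneg_left above (measureReal_nonneg (μ := μ) (s := Z ∩ T))
  rw [← integral_inter_add_sdiff hT hX, ← measureReal_inter_add_sdiff hT]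
  linarith

theorem mul_setIntegral_inter_ge_of_ge_of_le (hX : IntegrableOn X Z μ) (hZ : MeasurableSet Z)
    (hT : MeasurableSet T) (hge : ∀ ω ∈ Z ∩ T, c ≤ X ω) (hle : ∀ ω ∈ Z \ T, X ω ≤ c) :
    (∫ ω in Z, X ω ∂μ) * μ.real (Z ∩ T) ≤ μ.real Z * ∫ ω in Z ∩ T, X ω ∂μ := by
  have := mul_setIntegral_inter_le_of_le_of_ge (X := fun ω ↦ -X ω) (c := -c) hX.neg hZ hT
    (fun ω hω ↦ neg_le_neg (hge ω hω)) (fun ω hω ↦ neg_le_neg (hle ω hω))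
  simpa only [integral_neg, mul_neg, neg_mul, neg_le_neg_iff] using this

end Truncation

section Independence

variable {Ω α β : Type*} [MeasurableSpace Ω] [MeasurableSpace α] [MeasurableSpace β]
  {μ : Measure Ω} [IsFiniteMeasure μ] {W : Ω → α} {Y : Ω → β}

theorem ProbabilityTheory.IndepFun.integral_comp_prod_eq_integral_integral
    (hWY : IndepFun W Y μ) (hW : Measurable W) (hY : Measurable Y) {f : α × β → ℝ}
    (hf : StronglyMeasurable f) (hfi : Integrable (fun ω ↦ f (W ω, Y ω)) μ) :
    ∫ ω, f (W ω, Y ω) ∂μ = ∫ y, ∫ ω, f (W ω, y) ∂μ ∂(μ.map Y) := by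
  have hlaw : μ.map (fun ω ↦ (W ω, Y ω)) = (μ.map W).prod (μ.map Y) :=
    (indepFun_iff_map_prod_eq_prod_map_map hW.aemeasurable hY.aemeasurable).mp hWY
  have hint : Integrable f ((μ.map W).prod (μ.map Y)) := by
    rw [← hlaw]
    exact (integrable_map_measure hf.aestronglyMeasurable (hW.prodMk hY).aemeasurable).mpr hfi
  rw [← integral_map (hW.prodMk hY).aemeasurable hf.aestronglyMeasurable, hlaw,
    integral_prod_symm f hint]
  refine integral_congr_ae (ae_of_all _ fun y ↦ integral_map hW.aemeasurable ?_)
  exact (hf.comp_measurable measurable_prodMk_right).aestronglyMeasurable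

theorem ProbabilityTheory.IndepFun.setIntegral_preimage_eq_integral_setIntegral
    (hWY : IndepFun W Y μ) (hW : Measurable W) (hY : Measurable Y) {T : Set (α × β)}
    (hT : MeasurableSet T) {g : α → ℝ} (hg : Measurable g) (hgi : Integrable (g ∘ W) μ) :
    ∫ ω in {ω | (W ω, Y ω) ∈ T}, g (W ω) ∂μ
      = ∫ y, ∫ ω in {ω | (W ω, y) ∈ T}, g (W ω) ∂μ ∂(μ.map Y) := by
  have hmeas : ∀ {V : Ω → α × β}, Measurable V → MeasurableSet {ω | V ω ∈ T} := fun hV ↦ hV hT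
  have hind : ∀ {V : Ω → α × β}, Measurable V →
      ∫ ω in {ω | V ω ∈ T}, g (V ω).1 ∂μ = ∫ ω, T.indicator (fun p ↦ g p.1) (V ω) ∂μ :=
    fun hV ↦ (integral_indicator (hmeas hV)).symm
  rw [hind (hW.prodMk hY), hWY.integral_comp_prod_eq_integral_integral hW hY
    (f := T.indicator fun p ↦ g p.1) ((hg.comp measurable_fst).indicator hT).stronglyMeasurable]
  · simp only [hind (hW.prodMk measurable_const)]
  · exact (hgi.indicator (hmeas (hW.prodMk hY))).congr (ae_of_all _ fun ω ↦ rfl)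

variable {X : Ω → ℝ} {Z : Set Ω}

theorem setIntegral_inter_preimage_eq_integral_setIntegral
    (hindep : IndepFun (fun ω ↦ (X ω, Z.indicator (fun _ ↦ (1 : ℝ)) ω)) Y μ)
    (hX : Measurable X) (hY : Measurable Y) (hZ : MeasurableSet Z) {S : Set (ℝ × β)}
    (hS : MeasurableSet S) {u : ℝ → ℝ} (hu : Measurable u)
    (hui : Integrable (fun ω ↦ u (X ω)) μ) :
    ∫ ω in Z ∩ {ω | (X ω, Y ω) ∈ S}, u (X ω) ∂μ
      = ∫ y, ∫ ω in Z ∩ {ω | (X ω, y) ∈ S}, u (X ω) ∂μ ∂(μ.map Y) := by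
  set T : Set ((ℝ × ℝ) × β) := {p | p.1.2 = 1 ∧ (p.1.1, p.2) ∈ S}
  have hT : MeasurableSet T :=
    (measurableSet_singleton 1).preimage (measurable_fst.snd) |>.inter
      (hS.preimage (measurable_fst.fst.prodMk measurable_snd))
  have hset : ∀ V : Ω → β,
      {ω | ((X ω, Z.indicator (fun _ ↦ (1 : ℝ)) ω), V ω) ∈ T} = Z ∩ {ω | (X ω, V ω) ∈ S} := by
    intro V
    ext ω
    by_cases hω : ω ∈ Z <;> simp [T, hω]
  have := hindep.setIntegral_preimage_eq_integral_setIntegral (hX.prodMk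
    (measurable_const.indicator hZ)) hY hT (hu.comp measurable_fst) hui
  simpa only [hset, Function.comp_apply] using this

theorem mul_setIntegral_inter_le_mul_measureReal_of_forall
    (hindep : IndepFun (fun ω ↦ (X ω, Z.indicator (fun _ ↦ (1 : ℝ)) ω)) Y μ)
    (hX : Measurable X) (hXi : Integrable X μ) (hY : Measurable Y) (hZ : MeasurableSet Z)
    {S : Set (ℝ × β)} (hS : MeasurableSet S) {a b : ℝ}
    (h : ∀ y, a * ∫ ω in Z ∩ {ω | (X ω, y) ∈ S}, X ω ∂μ
      ≤ b * μ.real (Z ∩ {ω | (X ω, y) ∈ S})) :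
    a * ∫ ω in Z ∩ {ω | (X ω, Y ω) ∈ S}, X ω ∂μ ≤ b * μ.real (Z ∩ {ω | (X ω, Y ω) ∈ S}) := by
  rw [← sub_nonpos, ← setIntegral_mul_sub_const hXi.integrableOn,
    setIntegral_inter_preimage_eq_integral_setIntegral hindep hX hY hZ hS
      (u := fun x ↦ a * x - b) (by fun_prop) ((hXi.const_mul a).sub (integrable_const b))]
  refine integral_nonpos fun y ↦ ?_
  rw [Pi.zero_apply, setIntegral_mul_sub_const hXi.integrableOn, sub_nonpos]
  exact h y

theorem mul_measureReal_inter_le_mul_setIntegral_of_forall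
    (hindep : IndepFun (fun ω ↦ (X ω, Z.indicator (fun _ ↦ (1 : ℝ)) ω)) Y μ)
    (hX : Measurable X) (hXi : Integrable X μ) (hY : Measurable Y) (hZ : MeasurableSet Z)
    {S : Set (ℝ × β)} (hS : MeasurableSet S) {a b : ℝ}
    (h : ∀ y, b * μ.real (Z ∩ {ω | (X ω, y) ∈ S})
      ≤ a * ∫ ω in Z ∩ {ω | (X ω, y) ∈ S}, X ω ∂μ) :
    b * μ.real (Z ∩ {ω | (X ω, Y ω) ∈ S}) ≤ a * ∫ ω in Z ∩ {ω | (X ω, Y ω) ∈ S}, X ω ∂μ := by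
  have := mul_setIntegral_inter_le_mul_measureReal_of_forall hindep hX hXi hY hZ hS
    (a := -a) (b := -b) fun y ↦ by simpa only [neg_mul, neg_le_neg_iff] using h y
  simpa only [neg_mul, neg_le_neg_iff] using this

end Independence

theorem stmt10_general {Ω : Type*} [MeasurableSpace Ω] (μ : Measure Ω) [IsProbabilityMeasure μ]
    (X Y : Ω → ℝ) (hXint : Integrable X μ)
    (hXm : Measurable X) (hYm : Measurable Y)
    (Z : Set Ω) (hZ : MeasurableSet Z)
    -- the pair (X, 1_Z) is independent of Y
    (hindep : IndepFun (fun ω => (X ω, Z.indicator (fun _ => (1 : ℝ)) ω)) Y μ)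
    (hpos₁ : 0 < μ (Z ∩ {ω | Y ω ≤ X ω}))
    (hpos₂ : 0 < μ (Z ∩ {ω | X ω ≤ Y ω})) :
    (∫ ω in Z ∩ {ω | X ω ≤ Y ω}, X ω ∂μ) / (μ (Z ∩ {ω | X ω ≤ Y ω})).toReal
      ≤ (∫ ω in Z ∩ {ω | Y ω ≤ X ω}, X ω ∂μ) / (μ (Z ∩ {ω | Y ω ≤ X ω})).toReal := by
  set P := μ.real Z
  set E := ∫ ω in Z, X ω ∂μ
  have lower : P * ∫ ω in Z ∩ {ω | X ω ≤ Y ω}, X ω ∂μ ≤ E * μ.real (Z ∩ {ω | X ω ≤ Y ω}) :=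
    mul_setIntegral_inter_le_mul_measureReal_of_forall hindep hXm hXint hYm hZ
      (measurableSet_le measurable_fst measurable_snd) fun _ ↦
        mul_setIntegral_inter_le_of_le_of_ge hXint.integrableOn hZ (hXm measurableSet_Iic)
          (fun _ hω ↦ hω.2) (fun _ hω ↦ (not_le.mp hω.2).le)
  have upper : E * μ.real (Z ∩ {ω | Y ω ≤ X ω}) ≤ P * ∫ ω in Z ∩ {ω | Y ω ≤ X ω}, X ω ∂μ :=
    mul_measureReal_inter_le_mul_setIntegral_of_forall hindep hXm hXint hYm hZ
      (measurableSet_le measurable_snd measurable_fst) fun _ ↦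
        mul_setIntegral_inter_ge_of_ge_of_le hXint.integrableOn hZ (hXm measurableSet_Ici)
          (fun _ hω ↦ hω.2) (fun _ hω ↦ (not_le.mp hω.2).le)
  have hA : 0 < μ.real (Z ∩ {ω | X ω ≤ Y ω}) := ENNReal.toReal_pos hpos₂.ne' (measure_ne_top μ _)
  have hB : 0 < μ.real (Z ∩ {ω | Y ω ≤ X ω}) := ENNReal.toReal_pos hpos₁.ne' (measure_ne_top μ _)
  have hP : 0 < P := hA.trans_le (measureReal_mono Set.inter_subset_left)
  rw [← measureReal_def, ← measureReal_def]
  calc _ ≤ E / P := by rw [div_le_div_iff₀ hA hP]; linarith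
    _ ≤ _ := by rw [div_le_div_iff₀ hP hB]; linarith

theorem stmt10 {Ω : Type*} [MeasurableSpace Ω] (μ : Measure Ω) [IsProbabilityMeasure μ]
    (X Y : Ω → ℝ) (hXint : Integrable X μ)
    (hXm : Measurable X) (hYm : Measurable Y)
    (Z : Set Ω) (hZ : MeasurableSet Z)
    -- the pair (X, 1_Z) is independent of Y
    (hindep : IndepFun (fun ω => (X ω, Z.indicator (fun _ => (1 : ℝ)) ω)) Y μ)
    -- Y admits a probability density function
    [HasPDF Y μ]
    (hpos₁ : 0 < μ (Z ∩ {ω | Y ω ≤ X ω}))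
    (hpos₂ : 0 < μ (Z ∩ {ω | X ω ≤ Y ω})) :
    (∫ ω in Z ∩ {ω | X ω ≤ Y ω}, X ω ∂μ) / (μ (Z ∩ {ω | X ω ≤ Y ω})).toReal
      ≤ (∫ ω in Z ∩ {ω | Y ω ≤ X ω}, X ω ∂μ) / (μ (Z ∩ {ω | Y ω ≤ X ω})).toReal :=
  stmt10_general μ X Y hXint hXm hYm Z hZ hindep hpos₁ hpos₂
end

section
/- Suppose valuations for good g are i.i.d. uniform on [0, M]. If e_i ≤ e_j, then Pr(g ∈ A_i) ≥ (e_j/e_i)·Pr(g ∈ A_j), where the good is assigned to the agent maximizing v_k(g)/e_k. -/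
/-!
Write `ν` for the uniform law on `[0, M]`. By independence the law of the valuation vector is
`ν ^ n`, and integrating out the winner's own valuation `t` gives
`Pr(g ∈ A_k) = ∫ ∏_{m ≠ k} F(t e_m / e_k) dν(t)` with `F(x) = ν(-∞, x)`.
For `e_i ≤ e_j` the integrands compare pointwise: every factor `m ≠ i, j` is monotone in the
scale `1 / e_k`, while the factor `F(t e_i / e_j) = (e_i / e_j) F(t)` of the `j`-integrand is
exactly compensated by the weight `e_j / e_i`, leaving `F(t) ≤ F(t e_j / e_i)`, the factor of
the `i`-integrand.
-/

open MeasureTheory ProbabilityTheory Set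
open scoped ENNReal

def winnerSet {ι : Type*} (e : ι → ℝ) (k : ι) : Set (ι → ℝ) :=
  {x | ∀ m, m ≠ k → x m / e m < x k / e k}

lemma measurableSet_winnerSet {ι : Type*} [Countable ι] (e : ι → ℝ) (k : ι) :
    MeasurableSet (winnerSet e k) := by
  simp only [winnerSet, ofPred_forall]
  exact .iInter fun m => .iInter fun _ => measurableSet_lt (by fun_prop) (by fun_prop)

lemma pi_winnerSet {n : ℕ} (ν : Measure ℝ) [SigmaFinite ν] {e : Fin (n + 1) → ℝ}
    (he : ∀ k, 0 < e k) (k : Fin (n + 1)) :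
    Measure.pi (fun _ => ν) (winnerSet e k) = ∫⁻ t, ∏ m ∈ {k}ᶜ, ν (Iio (t / e k * e m)) ∂ν := by
  let S : Set (ℝ × (Fin n → ℝ)) := {p | ∀ m, p.2 m / e (k.succAbove m) < p.1 / e k}
  have hS : MeasurableSet S := by
    simp only [S, ofPred_forall]
    exact .iInter fun m => measurableSet_lt (by fun_prop) (by fun_prop)
  have hpre : winnerSet e k = MeasurableEquiv.piFinSuccAbove (fun _ => ℝ) k ⁻¹' S := by
    ext x
    simp only [winnerSet, S, mem_ofPred_eq, mem_preimage, MeasurableEquiv.piFinSuccAbove_apply,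
      Fin.insertNthEquiv_symm_apply, Fin.removeNth]
    refine ⟨fun h m => h _ (Fin.succAbove_ne k m), fun h m hm => ?_⟩
    obtain ⟨l, rfl⟩ := Fin.exists_succAbove_eq hm
    exact h l
  rw [hpre, (measurePreserving_piFinSuccAbove (fun _ => ν) k).measure_preimage_equiv,
    Measure.prod_apply hS]
  refine lintegral_congr fun t => ?_
  have hsec : Prod.mk t ⁻¹' S = univ.pi fun m => Iio (t / e k * e (k.succAbove m)) := by
    ext y
    simp only [S, mem_preimage, mem_ofPred_eq, mem_univ_pi, mem_Iio, div_lt_iff₀ (he _)]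
  rw [hsec, Measure.pi_pi, ← Fin.image_succAbove_univ,
    Finset.prod_image Fin.succAbove_right_injective.injOn]

lemma Finset.mul_prod_erase_le_prod_erase {ι M : Type*} [DecidableEq ι] [CommMonoid M]
    [PartialOrder M] [IsOrderedMonoid M] {s : Finset ι} {i j : ι} (hi : i ∈ s) (hj : j ∈ s)
    (hij : i ≠ j) {f g : ι → M} {c : M} (hji : c * g i ≤ f j)
    (hle : ∀ l ∈ s, l ≠ i → l ≠ j → g l ≤ f l) :
    c * ∏ l ∈ s.erase j, g l ≤ ∏ l ∈ s.erase i, f l := by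
  rw [← Finset.mul_prod_erase _ g (Finset.mem_erase.2 ⟨hij, hi⟩),
    ← Finset.mul_prod_erase _ f (Finset.mem_erase.2 ⟨hij.symm, hj⟩), ← mul_assoc,
    Finset.erase_right_comm]
  refine mul_le_mul' hji (Finset.prod_le_prod' fun l hl => ?_)
  simp only [Finset.mem_erase] at hl
  exact hle l hl.2.2 hl.2.1 hl.1

lemma cond_Icc_Iio {M c : ℝ} (hcM : c ≤ M) :
    volume[Iio c | Icc 0 M] = (ENNReal.ofReal M)⁻¹ * ENNReal.ofReal c := by
  have : Icc 0 M ∩ Iio c = Ico 0 c := by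
    ext; simp only [mem_inter_iff, mem_Icc, mem_Iio, mem_Ico]; grind
  rw [cond_apply measurableSet_Icc, Real.volume_Icc, sub_zero, this, Real.volume_Ico, sub_zero]

lemma ofReal_mul_cond_Icc_Iio_div {M r t : ℝ} (hr : 1 ≤ r) (ht : t ∈ Icc 0 M) :
    ENNReal.ofReal r * volume[Iio (t / r) | Icc 0 M] = volume[Iio t | Icc 0 M] := by
  rw [cond_Icc_Iio ((div_le_self ht.1 hr).trans ht.2), cond_Icc_Iio ht.2, mul_left_comm,
    ← ENNReal.ofReal_mul (by linarith), mul_div_cancel₀ _ (by linarith)]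

lemma ofReal_mul_prod_cond_Icc_Iio_le {ι : Type*} [Fintype ι] [DecidableEq ι] {M t : ℝ}
    {e : ι → ℝ} (he : ∀ k, 0 < e k) {i j : ι} (hne : i ≠ j) (hij : e i ≤ e j)
    (ht : t ∈ Icc 0 M) :
    ENNReal.ofReal (e j / e i) * ∏ m ∈ {j}ᶜ, volume[Iio (t / e j * e m) | Icc 0 M]
      ≤ ∏ m ∈ {i}ᶜ, volume[Iio (t / e i * e m) | Icc 0 M] := by
  rw [Finset.compl_singleton, Finset.compl_singleton]
  refine Finset.mul_prod_erase_le_prod_erase (Finset.mem_univ _) (Finset.mem_univ _) hne ?_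
    fun l _ _ _ => measure_mono (Iio_subset_Iio (mul_le_mul_of_nonneg_right
      (div_le_div_of_nonneg_left ht.1 (he i) hij) (he l).le))
  have hscale : t / e j * e i = t / (e j / e i) := by field_simp [(he i).ne', (he j).ne']
  calc ENNReal.ofReal (e j / e i) * volume[Iio (t / e j * e i) | Icc 0 M]
      = volume[Iio t | Icc 0 M] := by
        rw [hscale, ofReal_mul_cond_Icc_Iio_div ((one_le_div (he i)).2 hij) ht]
    _ ≤ volume[Iio (t / e i * e j) | Icc 0 M] := by
        refine measure_mono (Iio_subset_Iio ?_)
        calc t = t / e i * e i := (div_mul_cancel₀ t (he i).ne').symm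
          _ ≤ t / e i * e j := mul_le_mul_of_nonneg_left hij (div_nonneg ht.1 (he i).le)

lemma ofReal_mul_pi_cond_Icc_winnerSet_le {n : ℕ} {M : ℝ} {e : Fin (n + 1) → ℝ}
    (he : ∀ k, 0 < e k) {i j : Fin (n + 1)} (hij : e i ≤ e j) :
    ENNReal.ofReal (e j / e i) * Measure.pi (fun _ => volume[|Icc 0 M]) (winnerSet e j)
      ≤ Measure.pi (fun _ => volume[|Icc 0 M]) (winnerSet e i) := by
  rcases eq_or_ne i j with rfl | hne
  · rw [div_self (he i).ne', ENNReal.ofReal_one, one_mul]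
  rw [pi_winnerSet _ he, pi_winnerSet _ he, ← lintegral_const_mul' _ _ ENNReal.ofReal_ne_top]
  refine lintegral_mono_ae ?_
  filter_upwards [ae_cond_mem measurableSet_Icc] with t ht
  exact ofReal_mul_prod_cond_Icc_Iio_le he hne hij ht

theorem stmt12_general {Ω : Type*} [MeasurableSpace Ω] (μ : Measure Ω) [IsProbabilityMeasure μ]
    (n : ℕ) (V : Fin n → Ω → ℝ) (hmeas : ∀ k, Measurable (V k))
    -- the valuations are i.i.d. uniform on [0, M]
    (hindep : iIndepFun V μ)
    (M : ℝ)
    (hunif : ∀ k, μ.map (V k)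
      = (ENNReal.ofReal M)⁻¹ • (volume.restrict (Set.Icc (0 : ℝ) M)))
    (e : Fin n → ℝ) (he : ∀ k, 0 < e k)
    (i j : Fin n) (hij : e i ≤ e j) :
    -- Pr(good goes to i) ≥ (e_j/e_i) · Pr(good goes to j)
    (e j / e i) * (μ {ω | ∀ k, k ≠ j → V k ω / e k < V j ω / e j}).toReal
      ≤ (μ {ω | ∀ k, k ≠ i → V k ω / e k < V i ω / e i}).toReal := by
  obtain _ | n := n
  · exact i.elim0
  have hlaw : μ.map (fun ω k => V k ω) = Measure.pi fun _ => volume[|Icc 0 M] := by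
    rw [hindep.map_fun_eq_pi_map fun k => (hmeas k).aemeasurable]
    simp only [hunif, ProbabilityTheory.cond, Real.volume_Icc, sub_zero]
  have hwin (k : Fin (n + 1)) : μ {ω | ∀ m, m ≠ k → V m ω / e m < V k ω / e k}
      = Measure.pi (fun _ => volume[|Icc 0 M]) (winnerSet e k) := by
    rw [← hlaw, Measure.map_apply (measurable_pi_lambda _ hmeas) (measurableSet_winnerSet e k)]
    rfl
  rw [hwin, hwin, ← ENNReal.toReal_ofReal (div_nonneg (he j).le (he i).le),
    ← ENNReal.toReal_mul]
  exact ENNReal.toReal_mono (measure_ne_top _ _) (ofReal_mul_pi_cond_Icc_winnerSet_le he hij)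

theorem stmt12 {Ω : Type*} [MeasurableSpace Ω] (μ : Measure Ω) [IsProbabilityMeasure μ]
    (n : ℕ) (V : Fin n → Ω → ℝ) (hmeas : ∀ k, Measurable (V k))
    -- the valuations are i.i.d. uniform on [0, M]
    (hindep : iIndepFun V μ)
    (M : ℝ) (hM : 0 < M)
    (hunif : ∀ k, μ.map (V k)
      = (ENNReal.ofReal M)⁻¹ • (volume.restrict (Set.Icc (0 : ℝ) M)))
    (e : Fin n → ℝ) (he : ∀ k, 0 < e k)
    (i j : Fin n) (hij : e i ≤ e j) :
    -- Pr(good goes to i) ≥ (e_j/e_i) · Pr(good goes to j)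
    (e j / e i) * (μ {ω | ∀ k, k ≠ j → V k ω / e k < V j ω / e j}).toReal
      ≤ (μ {ω | ∀ k, k ≠ i → V k ω / e k < V i ω / e i}).toReal :=
  stmt12_general μ n V hmeas hindep M hunif e he i j hij
end

section
/- Suppose valuations for good g are independent uniform on [0, M_g]. Then for any agent j, Pr(g ∈ A_j) ≤ (∏_{k=1}^n e_k)/(n · e_j^n), where the good goes to the agent maximizing v_k(g)/e_k. -/
/-!
Writing `c k = e k / e j`, agent `j` wins iff `V k < c k * V j` for every `k ≠ j`. By independence,
conditionally on `V j = t` this has probability `∏_{k ≠ j} Pr(V k < c k t) ≤ ∏_{k ≠ j} c k t / M`,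
and averaging `t ^ (n - 1)` over the uniform law on `[0, M]` gives `M ^ (n - 1) / n`.
-/

open MeasureTheory ProbabilityTheory Set

lemma ProbabilityTheory.IndepFun.measure_preimage_eq_lintegral {Ω α β : Type*} [MeasurableSpace Ω]
    [MeasurableSpace α] [MeasurableSpace β] {μ : Measure Ω} [IsFiniteMeasure μ]
    {X : Ω → α} {Y : Ω → β} (hXY : IndepFun X Y μ) (hX : Measurable X) (hY : Measurable Y)
    {T : Set (α × β)} (hT : MeasurableSet T) :
    μ ((fun ω => (X ω, Y ω)) ⁻¹' T) = ∫⁻ x, μ (Y ⁻¹' (Prod.mk x ⁻¹' T)) ∂μ.map X := by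
  rw [← Measure.map_apply (hX.prodMk hY) hT,
    (indepFun_iff_map_prod_eq_prod_map_map hX.aemeasurable hY.aemeasurable).mp hXY,
    Measure.prod_apply hT]
  refine lintegral_congr fun x => ?_
  rw [Measure.map_apply hY (measurable_prodMk_left hT)]

lemma measure_forall_lt_mul_eq_lintegral {Ω ι : Type*} [MeasurableSpace Ω] {μ : Measure Ω}
    [IsFiniteMeasure μ] [DecidableEq ι] {V : ι → Ω → ℝ} (hV : ∀ i, Measurable (V i))
    (hindep : iIndepFun V μ) (c : ι → ℝ) {j : ι} {s : Finset ι} (hj : j ∉ s) :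
    μ {ω | ∀ i ∈ s, V i ω < c i * V j ω}
      = ∫⁻ t, ∏ i ∈ s, μ.map (V i) (Iio (c i * t)) ∂μ.map (V j) := by
  set Y : Ω → s → ℝ := fun ω i => V i ω
  have hY : Measurable Y := measurable_pi_lambda _ fun i => hV i
  have hjY : IndepFun (V j) Y μ :=
    (hindep.indepFun_finset {j} s (Finset.disjoint_singleton_left.mpr hj) hV).comp
      (measurable_pi_apply (⟨j, Finset.mem_singleton_self j⟩ : ({j} : Finset ι))) measurable_id
  set T : Set (ℝ × (s → ℝ)) := {p | ∀ i, p.2 i < c i * p.1}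
  have hT : MeasurableSet T := by
    simp only [T, ofPred_forall]
    exact MeasurableSet.iInter fun i =>
      measurableSet_lt measurable_snd.eval (measurable_fst.const_mul _)
  have hevent : {ω | ∀ i ∈ s, V i ω < c i * V j ω} = (fun ω => (V j ω, Y ω)) ⁻¹' T := by
    ext ω
    simp [T, Y]
  rw [hevent, hjY.measure_preimage_eq_lintegral (hV j) hY hT]
  refine lintegral_congr fun t => ?_
  have hslice : Y ⁻¹' (Prod.mk t ⁻¹' T) = ⋂ i ∈ s, V i ⁻¹' Iio (c i * t) := by
    ext ω
    simp [T, Y]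
  rw [hslice, hindep.meas_biInter fun i _ => ⟨Iio (c i * t), measurableSet_Iio, rfl⟩]
  exact Finset.prod_congr rfl fun i _ => (Measure.map_apply (hV i) measurableSet_Iio).symm

noncomputable def uniformIcc (M : ℝ) : Measure ℝ :=
  (ENNReal.ofReal M)⁻¹ • volume.restrict (Icc 0 M)

lemma uniformIcc_Iio_le {M : ℝ} (hM : 0 < M) (x : ℝ) :
    uniformIcc M (Iio x) ≤ ENNReal.ofReal (x / M) := by
  have hvol : volume.restrict (Icc 0 M) (Iio x) ≤ ENNReal.ofReal x :=
    calc volume.restrict (Icc 0 M) (Iio x) = volume (Iio x ∩ Icc 0 M) :=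
          Measure.restrict_apply measurableSet_Iio
      _ ≤ volume (Ico 0 x) := measure_mono fun y ⟨hyx, hy0, _⟩ => ⟨hy0, hyx⟩
      _ = ENNReal.ofReal x := by simp
  rw [uniformIcc, Measure.smul_apply, smul_eq_mul, ENNReal.ofReal_div_of_pos hM,
    div_eq_mul_inv, mul_comm]
  gcongr

lemma lintegral_Icc_mul_pow {M : ℝ} (hM : 0 ≤ M) {C : ℝ} (hC : 0 ≤ C) (m : ℕ) :
    ∫⁻ t in Icc 0 M, ENNReal.ofReal (C * t ^ m) = ENNReal.ofReal (C * M ^ (m + 1) / (m + 1)) := by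
  rw [← ofReal_integral_eq_lintegral_ofReal, integral_Icc_eq_integral_Ioc,
    ← intervalIntegral.integral_of_le hM, intervalIntegral.integral_const_mul, integral_pow]
  · simp [mul_div_assoc]
  · exact (continuous_const.mul (continuous_pow m)).integrableOn_Icc
  · filter_upwards [ae_restrict_mem measurableSet_Icc] with t ht
    have := ht.1
    positivity

lemma lintegral_prod_uniformIcc_Iio_le {ι : Type*} {M : ℝ} (hM : 0 < M) (s : Finset ι)
    {c : ι → ℝ} (hc : ∀ i ∈ s, 0 ≤ c i) :
    ∫⁻ t, ∏ i ∈ s, uniformIcc M (Iio (c i * t)) ∂uniformIcc M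
      ≤ ENNReal.ofReal ((∏ i ∈ s, c i) / (s.card + 1)) := by
  have hC : 0 ≤ (∏ i ∈ s, c i) / M ^ s.card := by
    have := Finset.prod_nonneg hc
    positivity
  have hbound : ∀ t ∈ Icc 0 M, ∏ i ∈ s, uniformIcc M (Iio (c i * t))
      ≤ ENNReal.ofReal ((∏ i ∈ s, c i) / M ^ s.card * t ^ s.card) := by
    intro t ⟨ht, _⟩
    calc ∏ i ∈ s, uniformIcc M (Iio (c i * t))
        ≤ ∏ i ∈ s, ENNReal.ofReal (c i * t / M) :=
          Finset.prod_le_prod' fun i _ => uniformIcc_Iio_le hM _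
      _ = ENNReal.ofReal ((∏ i ∈ s, c i) / M ^ s.card * t ^ s.card) := by
          rw [← ENNReal.ofReal_prod_of_nonneg fun i hi => by have := hc i hi; positivity]
          congr 1
          rw [Finset.prod_div_distrib, Finset.prod_mul_distrib, Finset.prod_const,
            Finset.prod_const]
          ring
  calc ∫⁻ t, ∏ i ∈ s, uniformIcc M (Iio (c i * t)) ∂uniformIcc M
      = (ENNReal.ofReal M)⁻¹ * ∫⁻ t in Icc 0 M, ∏ i ∈ s, uniformIcc M (Iio (c i * t)) :=
        lintegral_smul_measure _ _
    _ ≤ (ENNReal.ofReal M)⁻¹ *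
          ∫⁻ t in Icc 0 M, ENNReal.ofReal ((∏ i ∈ s, c i) / M ^ s.card * t ^ s.card) := by
        gcongr _ * ?_
        exact setLIntegral_mono' measurableSet_Icc hbound
    _ = ENNReal.ofReal ((∏ i ∈ s, c i) / (s.card + 1)) := by
        rw [lintegral_Icc_mul_pow hM.le hC, ← ENNReal.ofReal_inv_of_pos hM,
          ← ENNReal.ofReal_mul (by positivity)]
        congr 1
        field_simp
        ring

lemma prod_compl_singleton_div {ι : Type*} [Fintype ι] [DecidableEq ι] (e : ι → ℝ) {j : ι}
    (hj : e j ≠ 0) :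
    ∏ i ∈ {j}ᶜ, e i / e j = (∏ i, e i) / e j ^ Fintype.card ι := by
  have : Nonempty ι := ⟨j⟩
  obtain ⟨m, hm⟩ : ∃ m, Fintype.card ι = m + 1 := Nat.exists_eq_succ_of_ne_zero Fintype.card_ne_zero
  rw [Finset.prod_div_distrib, Finset.prod_const, Finset.card_compl, Finset.card_singleton,
    Fintype.prod_eq_mul_prod_compl j, hm, pow_succ', mul_div_mul_left _ _ hj, Nat.add_sub_cancel]

theorem stmt13 {Ω : Type*} [MeasurableSpace Ω] (μ : Measure Ω) [IsProbabilityMeasure μ]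
    (n : ℕ) (V : Fin n → Ω → ℝ) (hmeas : ∀ k, Measurable (V k))
    -- the valuations are independent uniform on [0, M]
    (hindep : iIndepFun V μ)
    (M : ℝ) (hM : 0 < M)
    (hunif : ∀ k, μ.map (V k)
      = (ENNReal.ofReal M)⁻¹ • (volume.restrict (Set.Icc (0 : ℝ) M)))
    (e : Fin n → ℝ) (he : ∀ k, 0 < e k)
    (j : Fin n) :
    (μ {ω | ∀ k, k ≠ j → V k ω / e k < V j ω / e j}).toReal
      ≤ (∏ k, e k) / (n * e j ^ n) := by
  have hevent : {ω | ∀ k, k ≠ j → V k ω / e k < V j ω / e j}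
      = {ω | ∀ k ∈ ({j}ᶜ : Finset (Fin n)), V k ω < e k / e j * V j ω} := by
    ext ω
    simp only [mem_ofPred_eq, Finset.mem_compl, Finset.mem_singleton]
    refine forall₂_congr fun k _ => ?_
    rw [div_lt_div_iff₀ (he k) (he j), div_mul_eq_mul_div, lt_div_iff₀ (he j), mul_comm (V j ω)]
  have hcard : ((({j}ᶜ : Finset (Fin n)).card : ℕ) : ℝ) + 1 = n := by
    rw [Finset.card_compl, Finset.card_singleton, Fintype.card_fin, Nat.cast_sub j.pos]
    push_cast
    ring
  have hbound : μ {ω | ∀ k, k ≠ j → V k ω / e k < V j ω / e j}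
      ≤ ENNReal.ofReal ((∏ k, e k) / (n * e j ^ n)) := by
    rw [hevent, measure_forall_lt_mul_eq_lintegral hmeas hindep _ (Finset.notMem_compl.mpr
      (Finset.mem_singleton_self j))]
    simp only [hunif]
    refine (lintegral_prod_uniformIcc_Iio_le hM _ fun k _ => (div_pos (he k) (he j)).le).trans ?_
    rw [hcard, prod_compl_singleton_div e (he j).ne', Fintype.card_fin, div_div, mul_comm]
  have hprod : 0 < ∏ k, e k := Finset.prod_pos fun k _ => he k
  have hej := he j
  exact ENNReal.toReal_le_of_le_ofReal (by positivity) hbound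
end

section
/- Consider the random process where at each step a uniformly random k-subset of the n agents pools and optimally redistributes their goods according to u_i-maximization. For any initial allocation, the probability that after t steps the allocation maximizes ∑_i u_i(A_i) is at least 1 − m·(1 − (k²−k)/(n²−n))^t, assuming each good g has a unique agent maximizing u_i(g). -/
open MeasureTheory ProbabilityTheory Finset

/-!
A good that has reached its unique maximizer `i*_g` never leaves it, and a good held by any
other agent `b` is sent to `i*_g` as soon as the chosen set contains both `b` and `i*_g`. The
current holder is a function of the earlier choices, hence independent of the next one, and a
uniform `k`-subset contains two given agents with probability
`C(n-2, k-2) / C(n, k) = (k² - k) / (n² - n)`. So each good is still misplaced after `t` steps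
with probability at most `(1 - p)^t`, and a union bound over the `m` goods concludes: an
allocation giving every good to its maximizer maximizes `∑ g, u (A g) g` term by term.
-/

theorem Nat.cast_choose_sub_two_div_choose {n k : ℕ} (hk : 2 ≤ k) (hkn : k ≤ n) :
    ((n - 2).choose (k - 2) : ℝ) / n.choose k = ((k : ℝ) ^ 2 - k) / ((n : ℝ) ^ 2 - n) := by
  have hmul : ((n.choose k : ℕ) : ℝ) * k.choose 2 = n.choose 2 * (n - 2).choose (k - 2) := by
    exact_mod_cast Nat.choose_mul hk
  have hnk : (n.choose k : ℝ) ≠ 0 := by exact_mod_cast (Nat.choose_pos hkn).ne'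
  have hn : (n : ℝ) ^ 2 - n ≠ 0 := by
    have : (2 : ℝ) ≤ n := by exact_mod_cast hk.trans hkn
    nlinarith
  rw [Nat.cast_choose_two, Nat.cast_choose_two] at hmul
  rw [div_eq_div_iff hnk hn]
  linear_combination -2 * hmul

theorem uniformOn_card_eq_pair_mem {α : Type*} [Fintype α]
    [MeasurableSpace (Finset α)] [DiscreteMeasurableSpace (Finset α)] {k : ℕ} (hk : 2 ≤ k)
    (hkn : k ≤ Fintype.card α) {a b : α} (hab : a ≠ b) :
    uniformOn {s : Finset α | s.card = k} {s | a ∈ s ∧ b ∈ s}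
      = ENNReal.ofReal (((k : ℝ) ^ 2 - k) / ((Fintype.card α : ℝ) ^ 2 - Fintype.card α)) := by
  classical
  have hP : {s : Finset α | s.card = k} = (powersetCard k (univ : Finset α) : Set (Finset α)) := by
    ext; simp
  have hPT : {s : Finset α | s.card = k} ∩ {s | a ∈ s ∧ b ∈ s}
      = ((powersetCard k (univ : Finset α)).filter ({a, b} ⊆ ·) : Set (Finset α)) := by
    ext s; simp [insert_subset_iff]
  rw [← uniformOn_inter_self (Set.toFinite _), hPT, hP, uniformOn_apply_finset,
    inter_eq_right.2 (filter_subset _ _),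
    card_filter_powersetCard_subset _ _ _ (subset_univ _) (by simpa [hab] using hk),
    card_powersetCard, card_univ, card_pair hab,
    ← Nat.cast_choose_sub_two_div_choose hk hkn,
    ENNReal.ofReal_div_of_pos (by exact_mod_cast Nat.choose_pos hkn),
    ENNReal.ofReal_natCast, ENNReal.ofReal_natCast]

theorem sq_sub_self_div_sq_sub_self_le_one {n k : ℕ} (hk : 2 ≤ k) (hkn : k ≤ n) :
    ((k : ℝ) ^ 2 - k) / ((n : ℝ) ^ 2 - n) ≤ 1 := by
  have hk' : (2 : ℝ) ≤ k := by exact_mod_cast hk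
  have hkn' : (k : ℝ) ≤ n := by exact_mod_cast hkn
  rw [div_le_one (by nlinarith)]
  nlinarith

theorem measure_preimage_compl_pair_mem {Ω α : Type*} [MeasurableSpace Ω] {μ : Measure Ω}
    [IsProbabilityMeasure μ] [Fintype α] [MeasurableSpace (Finset α)]
    [DiscreteMeasurableSpace (Finset α)] {X : Ω → Finset α} (hX : Measurable X) {k : ℕ}
    (hk : 2 ≤ k) (hkn : k ≤ Fintype.card α) (hunif : μ.map X = uniformOn {s | s.card = k})
    {a b : α} (hab : a ≠ b) :
    μ (X ⁻¹' {s | a ∈ s ∧ b ∈ s}ᶜ)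
      = ENNReal.ofReal (1 - ((k : ℝ) ^ 2 - k) / ((Fintype.card α : ℝ) ^ 2 - Fintype.card α)) := by
  have hn : (2 : ℝ) ≤ Fintype.card α := by exact_mod_cast hk.trans hkn
  have hk' : (2 : ℝ) ≤ k := by exact_mod_cast hk
  rw [Set.preimage_compl, prob_compl_eq_one_sub (hX MeasurableSet.of_discrete),
    ← Measure.map_apply hX MeasurableSet.of_discrete, hunif, uniformOn_card_eq_pair_mem hk hkn hab,
    ← ENNReal.ofReal_one, ← ENNReal.ofReal_sub _ (div_nonneg (by nlinarith) (by nlinarith))]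

theorem one_sub_sum_measure_compl_le_measure_iInter {Ω ι : Type*} [MeasurableSpace Ω]
    {μ : Measure Ω} [IsProbabilityMeasure μ] [Fintype ι] (E : ι → Set Ω) :
    1 - ∑ i, μ (E i)ᶜ ≤ μ (⋂ i, E i) := by
  rw [tsub_le_iff_right]
  calc 1 = μ ((⋂ i, E i) ∪ ⋃ i, (E i)ᶜ) := by
        rw [← Set.compl_iInter, Set.union_compl_self, measure_univ]
    _ ≤ μ (⋂ i, E i) + ∑ i, μ (E i)ᶜ :=
        (measure_union_le _ _).trans (add_le_add le_rfl (measure_iUnion_fintype_le _ _))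

theorem redistribute_eq_argmax {ι G : Type*} {u : ι → G → ℝ} {istar : G → ι}
    (hstar : ∀ g i, i ≠ istar g → u i g < u (istar g) g) {R : Finset ι → (G → ι) → G → ι}
    (hR₁ : ∀ s A g, A g ∉ s → R s A g = A g)
    (hR₂ : ∀ s A g, A g ∈ s → R s A g ∈ s ∧ ∀ i ∈ s, u i g ≤ u (R s A g) g)
    {s : Finset ι} {A : G → ι} {g : G} (h : A g = istar g ∨ (A g ∈ s ∧ istar g ∈ s)) :
    R s A g = istar g := by
  by_cases hA : A g ∈ s
  · obtain ⟨-, hmax⟩ := hR₂ s A g hA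
    by_contra hne
    exact (hstar g _ hne).not_ge (hmax _ (h.elim (· ▸ hA) And.right))
  · exact (hR₁ s A g hA).trans (h.resolve_right fun h' => hA h'.1)

section Absorption

variable {Ω β : Type*} [mβ : MeasurableSpace β]

abbrev sigmaBefore (S : ℕ → Ω → β) (t : ℕ) : MeasurableSpace Ω :=
  ⨆ j ∈ Set.Iio t, mβ.comap (S j)

variable {S : ℕ → Ω → β}

theorem sigmaBefore_mono {s t : ℕ} (hst : s ≤ t) : sigmaBefore S s ≤ sigmaBefore S t :=
  biSup_mono fun _ hj => lt_of_lt_of_le hj hst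

theorem measurable_sigmaBefore_succ (t : ℕ) : Measurable[sigmaBefore S (t + 1)] (S t) :=
  (comap_measurable (S t)).mono (le_biSup (fun j => mβ.comap (S j)) (Nat.lt_succ_self t)) le_rfl

theorem measurable_sigmaBefore_of_recursion {γ : Type*} [MeasurableSpace γ] {f : β → γ → γ}
    (hf : Measurable (Function.uncurry f)) {x₀ : γ} {X : ℕ → Ω → γ} (h0 : ∀ ω, X 0 ω = x₀)
    (hstep : ∀ t ω, X (t + 1) ω = f (S t ω) (X t ω)) (t : ℕ) :
    Measurable[sigmaBefore S t] (X t) := by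
  induction t with
  | zero => simpa only [funext h0] using measurable_const
  | succ t ih =>
    rw [funext (hstep t)]
    exact hf.comp ((measurable_sigmaBefore_succ t).prodMk
      (ih.mono (sigmaBefore_mono t.le_succ) le_rfl))

variable [MeasurableSpace Ω]

theorem sigmaBefore_le (hS : ∀ t, Measurable (S t)) (t : ℕ) :
    sigmaBefore S t ≤ ‹MeasurableSpace Ω› :=
  iSup₂_le fun j _ => (hS j).comap_le

theorem measure_inter_preimage_eq_mul_of_sigmaBefore {μ : Measure Ω}
    (hS_meas : ∀ t, Measurable (S t)) (hS : iIndepFun S μ) {t : ℕ} {A : Set Ω}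
    (hA : MeasurableSet[sigmaBefore S t] A) {B : Set β} (hB : MeasurableSet B) :
    μ (A ∩ S t ⁻¹' B) = μ A * μ (S t ⁻¹' B) := by
  have hindep := indep_iSup_of_disjoint (fun j => (hS_meas j).comap_le)
    ((iIndepFun_iff_iIndep _ _ _).1 hS) (S := Set.Iio t) (T := {t})
    (Set.disjoint_singleton_right.2 (lt_irrefl t))
  rw [_root_.iSup_singleton] at hindep
  exact (Indep_iff _ _ _).1 hindep A _ hA ⟨B, hB, rfl⟩

theorem measure_ne_le_pow_of_absorbing {μ : Measure Ω} [IsProbabilityMeasure μ]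
    (hS_meas : ∀ t, Measurable (S t)) (hS : iIndepFun S μ)
    {α : Type*} [Fintype α] [MeasurableSpace α] [MeasurableSingletonClass α]
    {Y : ℕ → Ω → α} (hY : ∀ t, Measurable[sigmaBefore S t] (Y t)) {a : α} {C : α → Set β}
    (hC : ∀ b, MeasurableSet (C b))
    (hstep : ∀ t ω, Y (t + 1) ω ≠ a → Y t ω ≠ a ∧ S t ω ∉ C (Y t ω))
    {q : ENNReal} (hq : ∀ t b, b ≠ a → μ (S t ⁻¹' (C b)ᶜ) ≤ q) (t : ℕ) :
    μ {ω | Y t ω ≠ a} ≤ q ^ t := by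
  classical
  induction t with
  | zero => simpa using prob_le_one
  | succ t ih =>
    have hfiber : ∀ b, MeasurableSet[sigmaBefore S t] (Y t ⁻¹' {b}) :=
      fun b => hY t (measurableSet_singleton b)
    have hcover :
        {ω | Y (t + 1) ω ≠ a} ⊆ ⋃ b ∈ univ.erase a, Y t ⁻¹' {b} ∩ S t ⁻¹' (C b)ᶜ := by
      intro ω hω
      obtain ⟨hne, hC⟩ := hstep t ω hω
      exact Set.mem_biUnion (mem_erase.2 ⟨hne, mem_univ _⟩) ⟨rfl, hC⟩
    have hsum : ∑ b ∈ univ.erase a, μ (Y t ⁻¹' {b}) = μ {ω | Y t ω ≠ a} := by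
      rw [sum_measure_preimage_singleton _ fun b _ => sigmaBefore_le hS_meas t _ (hfiber b)]
      congr 1; ext; simp
    calc μ {ω | Y (t + 1) ω ≠ a}
        ≤ ∑ b ∈ univ.erase a, μ (Y t ⁻¹' {b} ∩ S t ⁻¹' (C b)ᶜ) :=
          (measure_mono hcover).trans (measure_biUnion_finset_le _ _)
      _ = ∑ b ∈ univ.erase a, μ (Y t ⁻¹' {b}) * μ (S t ⁻¹' (C b)ᶜ) :=
          sum_congr rfl fun b _ =>
            measure_inter_preimage_eq_mul_of_sigmaBefore hS_meas hS (hfiber b) (hC b).compl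
      _ ≤ ∑ b ∈ univ.erase a, μ (Y t ⁻¹' {b}) * q :=
          sum_le_sum fun b hb => by gcongr; exact hq t b (mem_erase.1 hb).1
      _ = μ {ω | Y t ω ≠ a} * q := by rw [← sum_mul, hsum]
      _ ≤ q ^ (t + 1) := by rw [pow_succ]; gcongr

end Absorption

theorem stmt15_general {Ω : Type*} [MeasurableSpace Ω] (μ : Measure Ω) [IsProbabilityMeasure μ]
    (n m k : ℕ) (hk2 : 2 ≤ k) (hkn : k ≤ n)
    (u : Fin n → Fin m → ℝ)
    -- each good has a unique agent maximizing u_i(g)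
    (istar : Fin m → Fin n)
    (hstar : ∀ g i, i ≠ istar g → u i g < u (istar g) g)
    -- at each step an i.i.d. uniformly random k-subset of agents is chosen
    (S : ℕ → Ω → Finset (Fin n))
    (hSmeas : ∀ t, @Measurable Ω (Finset (Fin n)) _ ⊤ (S t))
    (hSindep : iIndepFun (m := fun _ => (⊤ : MeasurableSpace (Finset (Fin n)))) S μ)
    (hSunif : ∀ t, @Measure.map Ω (Finset (Fin n)) _ ⊤ (S t) μ
      = @uniformOn (Finset (Fin n)) ⊤ {s | s.card = k})
    -- the chosen subset optimally redistributes the goods its members hold: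
    -- `R s A` leaves goods held outside `s` untouched, and any good held by a
    -- member of `s` goes to a member of `s` maximizing `u · g` within `s`
    (R : Finset (Fin n) → (Fin m → Fin n) → (Fin m → Fin n))
    (hR₁ : ∀ s A g, A g ∉ s → R s A g = A g)
    (hR₂ : ∀ s A g, A g ∈ s → R s A g ∈ s ∧ ∀ i ∈ s, u i g ≤ u (R s A g) g)
    -- the process: start anywhere, apply one random redistribution per step
    (A0 : Fin m → Fin n) (Aproc : ℕ → Ω → (Fin m → Fin n))
    (hA0 : ∀ ω, Aproc 0 ω = A0)
    (hAstep : ∀ t ω, Aproc (t + 1) ω = R (S t ω) (Aproc t ω))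
    (t : ℕ) :
    1 - ENNReal.ofReal ((m : ℝ) *
        (1 - ((k : ℝ) ^ 2 - k) / ((n : ℝ) ^ 2 - n)) ^ t)
      ≤ μ {ω | ∀ B : Fin m → Fin n,
          ∑ g, u (B g) g ≤ ∑ g, u (Aproc t ω g) g} := by
  let : MeasurableSpace (Finset (Fin n)) := ⊤
  set p : ℝ := ((k : ℝ) ^ 2 - k) / ((n : ℝ) ^ 2 - n)
  have hp1 : 0 ≤ 1 - p := sub_nonneg.2 (sq_sub_self_div_sq_sub_self_le_one hk2 hkn)
  have hX : ∀ t, Measurable[sigmaBefore S t] (Aproc t) :=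
    measurable_sigmaBefore_of_recursion (measurable_of_countable _) hA0 hAstep
  have hmiss : ∀ t a b, a ≠ b →
      μ (S t ⁻¹' {s | a ∈ s ∧ b ∈ s}ᶜ) = ENNReal.ofReal (1 - p) := fun t a b hab => by
    have := measure_preimage_compl_pair_mem (hSmeas t) hk2 (by simpa using hkn) (hSunif t) hab
    rwa [Fintype.card_fin] at this
  have hholder : ∀ g, μ {ω | Aproc t ω g = istar g}ᶜ ≤ ENNReal.ofReal (1 - p) ^ t := fun g =>
    measure_ne_le_pow_of_absorbing hSmeas hSindep (Y := fun t ω => Aproc t ω g)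
      (fun t => (measurable_pi_apply g).comp (hX t)) (C := fun b => {s | b ∈ s ∧ istar g ∈ s})
      (fun _ => MeasurableSpace.measurableSet_top)
      (fun t ω hne => by
        rw [hAstep] at hne
        exact not_or.1 (mt (redistribute_eq_argmax hstar hR₁ hR₂) hne))
      (fun t b hb => (hmiss t b (istar g) hb).le) t
  have hmax : ∀ g i, u i g ≤ u (istar g) g := fun g i =>
    (eq_or_ne i (istar g)).elim (fun h => h ▸ le_rfl) fun h => (hstar g i h).le
  calc 1 - ENNReal.ofReal ((m : ℝ) * (1 - p) ^ t)
      = 1 - ∑ _ : Fin m, ENNReal.ofReal (1 - p) ^ t := by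
        rw [sum_const, card_univ, Fintype.card_fin, nsmul_eq_mul,
          ENNReal.ofReal_mul (Nat.cast_nonneg m), ENNReal.ofReal_natCast, ENNReal.ofReal_pow hp1]
    _ ≤ 1 - ∑ g, μ {ω | Aproc t ω g = istar g}ᶜ :=
        tsub_le_tsub_left (sum_le_sum fun g _ => hholder g) 1
    _ ≤ μ (⋂ g, {ω | Aproc t ω g = istar g}) := one_sub_sum_measure_compl_le_measure_iInter _
    _ ≤ μ {ω | ∀ B : Fin m → Fin n, ∑ g, u (B g) g ≤ ∑ g, u (Aproc t ω g) g} :=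
        measure_mono fun ω hω B => sum_le_sum fun g _ => (Set.mem_iInter.1 hω g) ▸ hmax g (B g)

theorem stmt15 {Ω : Type*} [MeasurableSpace Ω] (μ : Measure Ω) [IsProbabilityMeasure μ]
    (n m k : ℕ) (hk2 : 2 ≤ k) (hkn : k ≤ n)
    (v : Fin n → Fin m → ℝ) (e : Fin n → ℝ) (he : ∀ i, 0 < e i)
    (u : Fin n → Fin m → ℝ)
    (hu : ∀ i g, u i g = Real.log (v i g + e i) - Real.log (e i))
    -- each good has a unique agent maximizing u_i(g)
    (istar : Fin m → Fin n)
    (hstar : ∀ g i, i ≠ istar g → u i g < u (istar g) g)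
    -- at each step an i.i.d. uniformly random k-subset of agents is chosen
    (S : ℕ → Ω → Finset (Fin n))
    (hSmeas : ∀ t, @Measurable Ω (Finset (Fin n)) _ ⊤ (S t))
    (hSindep : iIndepFun (m := fun _ => (⊤ : MeasurableSpace (Finset (Fin n)))) S μ)
    (hSunif : ∀ t, @Measure.map Ω (Finset (Fin n)) _ ⊤ (S t) μ
      = @uniformOn (Finset (Fin n)) ⊤ {s | s.card = k})
    -- the chosen subset optimally redistributes the goods its members hold:
    -- `R s A` leaves goods held outside `s` untouched, and any good held by a
    -- member of `s` goes to a member of `s` maximizing `u · g` within `s`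
    (R : Finset (Fin n) → (Fin m → Fin n) → (Fin m → Fin n))
    (hR₁ : ∀ s A g, A g ∉ s → R s A g = A g)
    (hR₂ : ∀ s A g, A g ∈ s → R s A g ∈ s ∧ ∀ i ∈ s, u i g ≤ u (R s A g) g)
    -- the process: start anywhere, apply one random redistribution per step
    (A0 : Fin m → Fin n) (Aproc : ℕ → Ω → (Fin m → Fin n))
    (hA0 : ∀ ω, Aproc 0 ω = A0)
    (hAstep : ∀ t ω, Aproc (t + 1) ω = R (S t ω) (Aproc t ω))
    (t : ℕ) :
    1 - ENNReal.ofReal ((m : ℝ) *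
        (1 - ((k : ℝ) ^ 2 - k) / ((n : ℝ) ^ 2 - n)) ^ t)
      ≤ μ {ω | ∀ B : Fin m → Fin n,
          ∑ g, u (B g) g ≤ ∑ g, u (Aproc t ω g) g} :=
  stmt15_general μ n m k hk2 hkn u istar hstar S hSmeas hSindep hSunif R hR₁ hR₂ A0 Aproc hA0 hAstep
    t
end
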